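/- Let I=(A,B,≻,q) be a school matching instance with n = |A|+|B| agents. Then the number of rotations satisfies |R(I)| ≤ n². -/

import Mathlib

open Classical
open scoped ENNReal

noncomputable section

namespace SM

/-- A school matching instance: students `A`, schools `B`, strict preference
orders over the other side plus the outside option `∅` (encoded as `none`),
and quotas `q b ≤ |A|`. -/
structure SchoolInstance (A B : Type) [Fintype A] [Fintype B] where
  prefA : A → Option B → Option B → Prop
  prefB : B → Option A → Option A → Prop
  prefA_sto : ∀ a, IsStrictTotalOrder (Option B) (prefA a)
  prefB_sto : ∀ b, IsStrictTotalOrder (Option A) (prefB b)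
  q : B → ℕ
  q_le : ∀ b, q b ≤ Fintype.card A

variable {A B : Type} [Fintype A] [Fintype B] [DecidableEq A] [DecidableEq B]

/-- A matching: every student is assigned a school or the outside option, and
each school receives at most `q b` students.  (A school is implicitly paired
with the outside option exactly when it has strictly fewer than `q b`
students, and a student is paired with the outside option exactly when it has
no school; this determines the set of pairs of the matching.) -/
structure Matching {A B : Type} [Fintype A] [Fintype B] (I : SchoolInstance A B) where
  toFun : A → Option B
  quota : ∀ b : B, (Finset.univ.filter fun a => toFun a = some b).card ≤ I.q b

instance (I : SchoolInstance A B) : Nonempty (Matching I) := by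
  refine ⟨⟨fun _ => none, fun b => ?_⟩⟩
  have h : (Finset.univ.filter fun _ : A => (none : Option B) = some b) = ∅ :=
    Finset.filter_false_of_mem (by intro a _; simp)
  rw [h, Finset.card_empty]
  exact Nat.zero_le _

/-- The students assigned to school `b`. -/
def assignedTo (I : SchoolInstance A B) (M : Matching I) (b : B) : Finset A :=
  Finset.univ.filter fun a => M.toFun a = some b

/-- School `b` has strictly fewer than `q b` students, i.e. is also paired
with the outside option. -/
def hasSlack (I : SchoolInstance A B) (M : Matching I) (b : B) : Prop :=
  (assignedTo I M b).card < I.q b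

/-- `x ∈ M(b)`: the partners of school `b` (students assigned to it, plus the
outside option when it is under quota). -/
def inPartners (I : SchoolInstance A B) (M : Matching I) (b : B) (x : Option A) : Prop :=
  (∃ a : A, x = some a ∧ M.toFun a = some b) ∨ (x = none ∧ hasSlack I M b)

/-- `M(b)` as a set. -/
def partnersSet (I : SchoolInstance A B) (M : Matching I) (b : B) : Set (Option A) :=
  {x | inPartners I M b x}

/-- The pair `ab` blocks `M`. -/
def BlocksPair (I : SchoolInstance A B) (M : Matching I) (a : A) (b : B) : Prop :=
  I.prefA a (some b) (M.toFun a) ∧ ∃ x, inPartners I M b x ∧ I.prefB b (some a) x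

/-- Student `a` blocks `M` (prefers the outside option to its partner). -/
def BlocksStudent (I : SchoolInstance A B) (M : Matching I) (a : A) : Prop :=
  I.prefA a none (M.toFun a)

/-- School `b` blocks `M` (prefers the outside option to one of its partners). -/
def BlocksSchool (I : SchoolInstance A B) (M : Matching I) (b : B) : Prop :=
  ∃ a : A, M.toFun a = some b ∧ I.prefB b none (some a)

/-- Stability: no blocking pair and no blocking agent. -/
def Stable (I : SchoolInstance A B) (M : Matching I) : Prop :=
  (¬ ∃ a b, BlocksPair I M a b) ∧ (¬ ∃ a, BlocksStudent I M a) ∧ (¬ ∃ b, BlocksSchool I M b)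

/-- `M ≥ M'`: every student weakly prefers `M` to `M'`. -/
def matGE (I : SchoolInstance A B) (M M' : Matching I) : Prop :=
  ∀ a : A, M.toFun a = M'.toFun a ∨ I.prefA a (M.toFun a) (M'.toFun a)

/-- `M' < M` in the student order. -/
def matLT (I : SchoolInstance A B) (M' M : Matching I) : Prop :=
  matGE I M M' ∧ M'.toFun ≠ M.toFun

/-- `M'` is an immediate predecessor of `M` in `(S(I), ≥)`. -/
def ImmPred (I : SchoolInstance A B) (M' M : Matching I) : Prop :=
  Stable I M' ∧ Stable I M ∧ matLT I M' M ∧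
    ¬ ∃ M'' : Matching I, Stable I M'' ∧ matLT I M' M'' ∧ matLT I M'' M

/-- The type in which rotations live: pairs `(ρ₊, ρ₋)` of sets of
student/school pairs (with the outside option allowed on either side). -/
abbrev Rot (A B : Type) : Type :=
  Finset (Option A × Option B) × Finset (Option A × Option B)

/-- The set of pairs of a matching: each student with its partner, and each
under-quota school with the outside option. -/
def pairsOf (I : SchoolInstance A B) (M : Matching I) : Finset (Option A × Option B) :=
  Finset.univ.filter fun p =>
    (∃ a : A, p = (some a, M.toFun a)) ∨ (∃ b : B, hasSlack I M b ∧ p = (none, some b))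

/-- The rotation `ρ(M, M') = (M ∖ M', M' ∖ M)`. -/
def rho (I : SchoolInstance A B) (M M' : Matching I) : Rot A B :=
  (pairsOf I M \ pairsOf I M', pairsOf I M' \ pairsOf I M)

/-- `R(I)`: the set of all rotations of `I`. -/
def RotSet (I : SchoolInstance A B) : Set (Rot A B) :=
  {r | ∃ M M' : Matching I, ImmPred I M' M ∧ r = rho I M M'}

/-- `c` is a maximal chain of stable matchings from `M0` down to `M`:
consecutive entries are immediate predecessors. -/
def chainTo (I : SchoolInstance A B) (M0 M : Matching I) (c : List (Matching I)) : Prop :=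
  c.head? = some M0 ∧ c.getLast? = some M ∧ (∀ N ∈ c, Stable I N) ∧
    List.Chain' (fun X Y => ImmPred I Y X) c

/-- The set of rotations eliminated along the chain `c`. -/
def chainRots (I : SchoolInstance A B) (c : List (Matching I)) : Set (Rot A B) :=
  {r | ∃ (i : ℕ) (X Y : Matching I), getElem? c i = some X ∧ getElem? c (i + 1) = some Y ∧ r = rho I X Y}

/-- `ρ` is exposed in `M`. -/
def Exposed (I : SchoolInstance A B) (r : Rot A B) (M : Matching I) : Prop :=
  ∃ M', ImmPred I M' M ∧ r = rho I M M'

/-- The rotation poset `ρ ⊵ ρ'` (relative to the rotation-set map `RM`):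
either `ρ = ρ'`, or `ρ ∈ R_M` for every stable `M` in which `ρ'` is exposed. -/
def domRel (I : SchoolInstance A B) (RM : Matching I → Set (Rot A B)) (r r' : Rot A B) : Prop :=
  r = r' ∨ ∀ M, Stable I M → Exposed I r' M → r ∈ RM M

/-- `ρ ▷ ρ'`. -/
def strictDom (I : SchoolInstance A B) (RM : Matching I → Set (Rot A B)) (r r' : Rot A B) : Prop :=
  domRel I RM r r' ∧ r ≠ r'

/-- `R ⊆ R(I)` is upper-closed in the rotation poset. -/
def UpperClosed (I : SchoolInstance A B) (RM : Matching I → Set (Rot A B))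
    (R : Set (Rot A B)) : Prop :=
  R ⊆ RotSet I ∧ ∀ r' ∈ R, ∀ r ∈ RotSet I, domRel I RM r r' → r ∈ R

/-- `N` is the join `M ∨ M'` (least upper bound) in `(S(I), ≥)`. -/
def IsJoin (I : SchoolInstance A B) (M M' N : Matching I) : Prop :=
  Stable I N ∧ matGE I N M ∧ matGE I N M' ∧
    ∀ P, Stable I P → matGE I P M → matGE I P M' → matGE I P N

/-- `N` is the meet `M ∧ M'` (greatest lower bound) in `(S(I), ≥)`. -/
def IsMeet (I : SchoolInstance A B) (M M' N : Matching I) : Prop :=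
  Stable I N ∧ matGE I M N ∧ matGE I M' N ∧
    ∀ P, Stable I P → matGE I M P → matGE I M' P → matGE I N P

/-- `F` is a (nonempty) sublattice of the lattice of stable matchings. -/
def IsSublattice (I : SchoolInstance A B) (F : Set (Matching I)) : Prop :=
  F.Nonempty ∧ (∀ M ∈ F, Stable I M) ∧
    (∀ M ∈ F, ∀ M' ∈ F, ∃ N ∈ F, IsJoin I M M' N) ∧
    (∀ M ∈ F, ∀ M' ∈ F, ∃ N ∈ F, IsMeet I M M' N)

/-- `ρ ~ ρ'`: the two rotations are eliminated together in every matching of `F`. -/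
def rotEquiv (I : SchoolInstance A B) (RM : Matching I → Set (Rot A B))
    (F : Set (Matching I)) (r r' : Rot A B) : Prop :=
  ∀ M ∈ F, (r ∈ RM M ↔ r' ∈ RM M)

/-- The trivial meta-rotation `θ₀^F` of rotations eliminated in every matching of `F`. -/
def theta0 (I : SchoolInstance A B) (RM : Matching I → Set (Rot A B))
    (F : Set (Matching I)) : Set (Rot A B) :=
  {r | r ∈ RotSet I ∧ ∀ M ∈ F, r ∈ RM M}

/-- The trivial meta-rotation `θ_z^F` of rotations eliminated in no matching of `F`. -/
def thetaZ (I : SchoolInstance A B) (RM : Matching I → Set (Rot A B))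
    (F : Set (Matching I)) : Set (Rot A B) :=
  {r | r ∈ RotSet I ∧ ∀ M ∈ F, r ∉ RM M}

/-- `θ` is a meta-rotation of `F` (an equivalence class of `~`). -/
def IsMetaRot (I : SchoolInstance A B) (RM : Matching I → Set (Rot A B))
    (F : Set (Matching I)) (θ : Set (Rot A B)) : Prop :=
  ∃ r ∈ RotSet I, θ = {r' | r' ∈ RotSet I ∧ rotEquiv I RM F r r'}

/-- `θ` is a proper meta-rotation of `F`. -/
def IsProperMeta (I : SchoolInstance A B) (RM : Matching I → Set (Rot A B))
    (F : Set (Matching I)) (θ : Set (Rot A B)) : Prop :=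
  IsMetaRot I RM F θ ∧ θ ≠ theta0 I RM F ∧ θ ≠ thetaZ I RM F

/-- `θ ⊵^F θ'` on (proper) meta-rotations. -/
def metaDom (I : SchoolInstance A B) (RM : Matching I → Set (Rot A B))
    (F : Set (Matching I)) (θ θ' : Set (Rot A B)) : Prop :=
  ∀ M ∈ F, θ' ⊆ RM M → θ ⊆ RM M

/-- `Θ_M`: the set of proper meta-rotations contained in `R_M`. -/
def ThetaM (I : SchoolInstance A B) (RM : Matching I → Set (Rot A B))
    (F : Set (Matching I)) (M : Matching I) : Set (Set (Rot A B)) :=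
  {θ | IsProperMeta I RM F θ ∧ θ ⊆ RM M}

/-- `Θ` is an upper-closed set of proper meta-rotations. -/
def UCProper (I : SchoolInstance A B) (RM : Matching I → Set (Rot A B))
    (F : Set (Matching I)) (Θ : Set (Set (Rot A B))) : Prop :=
  (∀ θ ∈ Θ, IsProperMeta I RM F θ) ∧
    ∀ θ' ∈ Θ, ∀ θ, IsProperMeta I RM F θ → metaDom I RM F θ θ' → θ ∈ Θ

/-- `M_R`: the stable matching whose rotation set is `R` (via definite description). -/
def MofR (I : SchoolInstance A B) (RM : Matching I → Set (Rot A B))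
    (R : Set (Rot A B)) : Matching I :=
  Classical.epsilon fun M => Stable I M ∧ RM M = R

/-- `R^θ = θ₀^F ∪ ⋃ {θ' proper : θ' ⊵^F θ}`. -/
def Rup (I : SchoolInstance A B) (RM : Matching I → Set (Rot A B))
    (F : Set (Matching I)) (θ : Set (Rot A B)) : Set (Rot A B) :=
  theta0 I RM F ∪ ⋃₀ {θ' | IsProperMeta I RM F θ' ∧ metaDom I RM F θ' θ}

/-- `R_θ = θ₀^F ∪ ⋃ {θ' proper : θ' ▷^F θ}`. -/
def Rdn (I : SchoolInstance A B) (RM : Matching I → Set (Rot A B))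
    (F : Set (Matching I)) (θ : Set (Rot A B)) : Set (Rot A B) :=
  theta0 I RM F ∪ ⋃₀ {θ' | IsProperMeta I RM F θ' ∧ metaDom I RM F θ' θ ∧ θ' ≠ θ}

/-- `M^θ`. -/
def Mup (I : SchoolInstance A B) (RM : Matching I → Set (Rot A B))
    (F : Set (Matching I)) (θ : Set (Rot A B)) : Matching I :=
  MofR I RM (Rup I RM F θ)

/-- `M_θ`. -/
def Mdn (I : SchoolInstance A B) (RM : Matching I → Set (Rot A B))
    (F : Set (Matching I)) (θ : Set (Rot A B)) : Matching I :=
  MofR I RM (Rdn I RM F θ)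

/-- The meet `M ∧ M'` in the lattice of stable matchings (via definite description). -/
def meetM (I : SchoolInstance A B) (M M' : Matching I) : Matching I :=
  Classical.epsilon fun N => IsMeet I M M' N

/-- First order differential `∂f_θ = f(M^θ) − f(M_θ)`. -/
def d1 (I : SchoolInstance A B) (RM : Matching I → Set (Rot A B))
    (F : Set (Matching I)) (f : Matching I → ℝ) (θ : Set (Rot A B)) : ℝ :=
  f (Mup I RM F θ) - f (Mdn I RM F θ)

/-- Second order differential
`∂²f_{θ,θ'} = f(M^θ ∧ M_{θ'}) + f(M_θ ∧ M^{θ'}) − f(M_θ ∧ M_{θ'}) − f(M^θ ∧ M^{θ'})`. -/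
def d2 (I : SchoolInstance A B) (RM : Matching I → Set (Rot A B))
    (F : Set (Matching I)) (f : Matching I → ℝ) (θ θ' : Set (Rot A B)) : ℝ :=
  f (meetM I (Mup I RM F θ) (Mdn I RM F θ')) + f (meetM I (Mdn I RM F θ) (Mup I RM F θ'))
    - f (meetM I (Mdn I RM F θ) (Mdn I RM F θ')) - f (meetM I (Mup I RM F θ) (Mup I RM F θ'))

/-- The greatest element `M₀^F` of `F` (via definite description). -/
def topF (I : SchoolInstance A B) (F : Set (Matching I)) : Matching I :=
  Classical.epsilon fun N => N ∈ F ∧ ∀ P ∈ F, matGE I N P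

/-- Vertices of the digraph: all rotations, plus a source `s` and sink `t`. -/
abbrev Vtx (A B : Type) : Type := Rot A B ⊕ Bool

/-- The source `s`. -/
def srcV : Vtx A B := Sum.inr true

/-- The sink `t`. -/
def tgtV : Vtx A B := Sum.inr false

/-- The value of the cut `S` for the capacity function `u`: the total capacity
of the arcs leaving `S`. -/
def cutVal (u : Vtx A B → Vtx A B → ℝ≥0∞) (S : Set (Vtx A B)) : ℝ≥0∞ :=
  ∑ p : Vtx A B × Vtx A B, if p.1 ∈ S ∧ p.2 ∉ S then u p.1 p.2 else 0

/-- The `s`-`t` cut `{s} ∪ R`. -/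
def cutOf (R : Set (Rot A B)) : Set (Vtx A B) := insert srcV (Sum.inl '' R)

/-- `(u, C)` witnesses minimum cut representability of `Π(f, F)`: for every
`R ⊆ R(I)`, the cut `{s} ∪ R` has finite capacity iff `R` is upper-closed and
`M_R ∈ F`, and in that case its value is `f(M_R) + C`. -/
def MinCutRepWith (I : SchoolInstance A B) (RM : Matching I → Set (Rot A B))
    (F : Set (Matching I)) (f : Matching I → ℝ)
    (u : Vtx A B → Vtx A B → ℝ≥0∞) (C : ℝ) : Prop :=
  ∀ R : Set (Rot A B), R ⊆ RotSet I →
    ((cutVal u (cutOf R) ≠ ⊤ ↔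
        (UpperClosed I RM R ∧ ∃ M, Stable I M ∧ RM M = R ∧ M ∈ F)) ∧
      (∀ M, Stable I M → RM M = R → M ∈ F → (cutVal u (cutOf R)).toReal = f M + C))

/-- The problem `Π(f, F)` is minimum cut representable. -/
def MinCutRep (I : SchoolInstance A B) (RM : Matching I → Set (Rot A B))
    (F : Set (Matching I)) (f : Matching I → ℝ) : Prop :=
  ∃ u C, MinCutRepWith I RM F f u C

/-- The cut digraph `D^{f,F}` (with representative rotations `rep` and
constant `γ`); capacities of parallel arcs are added. -/
def cutDigraph (I : SchoolInstance A B) (RM : Matching I → Set (Rot A B))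
    (F : Set (Matching I)) (f : Matching I → ℝ)
    (rep : Set (Rot A B) → Rot A B) (γ : ℝ) : Vtx A B → Vtx A B → ℝ≥0∞ :=
  fun x y =>
    (if ∃ θ, IsMetaRot I RM F θ ∧ ∃ r ∈ θ, ∃ r' ∈ θ, r ≠ r' ∧ x = Sum.inl r ∧ y = Sum.inl r'
      then ⊤ else 0)
    + (if ∃ θ θ', IsProperMeta I RM F θ ∧ IsProperMeta I RM F θ' ∧ θ ≠ θ' ∧
          metaDom I RM F θ' θ ∧ x = Sum.inl (rep θ) ∧ y = Sum.inl (rep θ')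
        then ⊤ else 0)
    + (∑ θ : Set (Rot A B), ∑ θ' : Set (Rot A B),
        if IsProperMeta I RM F θ ∧ IsProperMeta I RM F θ' ∧ θ ≠ θ' ∧
            x = Sum.inl (rep θ) ∧ y = Sum.inl (rep θ')
        then ENNReal.ofReal ((1 / 2) * d2 I RM F f θ θ') else 0)
    + (if (theta0 I RM F).Nonempty ∧ x = srcV ∧ y = Sum.inl (rep (theta0 I RM F))
        then ⊤ else 0)
    + (if (thetaZ I RM F).Nonempty ∧ x = Sum.inl (rep (thetaZ I RM F)) ∧ y = tgtV
        then ⊤ else 0)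
    + (∑ θ : Set (Rot A B),
        if IsProperMeta I RM F θ ∧ x = Sum.inl (rep θ) ∧ y = tgtV
        then ENNReal.ofReal (d1 I RM F f θ -
          (1 / 2) * (∑ θ' : Set (Rot A B),
            if IsProperMeta I RM F θ' ∧ θ' ≠ θ then d2 I RM F f θ θ' else 0) + γ)
        else 0)
    + (∑ θ : Set (Rot A B),
        if IsProperMeta I RM F θ ∧ x = srcV ∧ y = Sum.inl (rep θ)
        then ENNReal.ofReal γ else 0)

/-- `b` prefers `S'` to `S''`: every member of `S'` is preferred to every
member of `S'' ∖ S'`. -/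
def prefersSet (I : SchoolInstance A B) (b : B) (S' S'' : Set (Option A)) : Prop :=
  ∀ x ∈ S', ∀ y ∈ S'', y ∉ S' → I.prefB b x y

/-- `A(ρ)`: students appearing in `ρ₊`. -/
def Aof (r : Rot A B) : Set A := {a | ∃ b : B, (some a, some b) ∈ r.1}

/-- `B(ρ)`: schools appearing in `ρ₊`. -/
def Bof (r : Rot A B) : Set B := {b | ∃ a : A, (some a, some b) ∈ r.1}

/-- `ρ₊(b)`: students matched to `b` in `ρ₊`. -/
def rhoPlusB (r : Rot A B) (b : B) : Set A := {a | (some a, some b) ∈ r.1}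

/-- `R^ρ = {ρ' : ρ' ⊵ ρ}`. -/
def RupRot (I : SchoolInstance A B) (RM : Matching I → Set (Rot A B))
    (r : Rot A B) : Set (Rot A B) :=
  {r' | r' ∈ RotSet I ∧ domRel I RM r' r}

/-- `R_ρ = {ρ' : ρ' ▷ ρ}`. -/
def RdnRot (I : SchoolInstance A B) (RM : Matching I → Set (Rot A B))
    (r : Rot A B) : Set (Rot A B) :=
  {r' | r' ∈ RotSet I ∧ strictDom I RM r' r}

/-- `M^ρ`. -/
def MupRot (I : SchoolInstance A B) (RM : Matching I → Set (Rot A B))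
    (r : Rot A B) : Matching I :=
  MofR I RM (RupRot I RM r)

/-- `M_ρ`. -/
def MdnRot (I : SchoolInstance A B) (RM : Matching I → Set (Rot A B))
    (r : Rot A B) : Matching I :=
  MofR I RM (RdnRot I RM r)

/-- First order differential of `f` at a rotation: `∂f_ρ = f(M^ρ) − f(M_ρ)`. -/
def d1Rot (I : SchoolInstance A B) (RM : Matching I → Set (Rot A B))
    (f : Matching I → ℝ) (r : Rot A B) : ℝ :=
  f (MupRot I RM r) - f (MdnRot I RM r)

/-- Second order differential of `f` at a pair of distinct rotations. -/
def d2Rot (I : SchoolInstance A B) (RM : Matching I → Set (Rot A B))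
    (f : Matching I → ℝ) (r r' : Rot A B) : ℝ :=
  f (meetM I (MupRot I RM r) (MdnRot I RM r')) + f (meetM I (MdnRot I RM r) (MupRot I RM r'))
    - f (meetM I (MdnRot I RM r) (MdnRot I RM r'))
    - f (meetM I (MupRot I RM r) (MupRot I RM r'))

/-- The pair `(ρ_in, ρ_out)` characterizes the stable matchings assigning both
siblings `a, ā` to school `b`. -/
def siblingChar (I : SchoolInstance A B) (RM : Matching I → Set (Rot A B))
    (a abar : A) (b : B) (p : Rot A B × Rot A B) : Prop :=
  ∀ M : Matching I, Stable I M →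
    ((M.toFun a = some b ∧ M.toFun abar = some b) ↔ (p.1 ∈ RM M ∧ p.2 ∉ RM M))

/-- Some stable matching assigns both `a` and `ā` to `b`. -/
def goodSchool (I : SchoolInstance A B) (a abar : A) (b : B) : Prop :=
  ∃ M, Stable I M ∧ M.toFun a = some b ∧ M.toFun abar = some b

/-- The pair `(ρ_in(a,ā,b), ρ_out(a,ā,b))` (via definite description). -/
def siblingPair (I : SchoolInstance A B) (RM : Matching I → Set (Rot A B))
    (a abar : A) (b : B) : Rot A B × Rot A B :=
  Classical.epsilon fun p => p.1 ∈ RotSet I ∧ p.2 ∈ RotSet I ∧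
    siblingChar I RM a abar b p ∧ strictDom I RM p.1 p.2

/-- `R_in(a, ā)`. -/
def Rin (I : SchoolInstance A B) (RM : Matching I → Set (Rot A B))
    (a abar : A) : Set (Rot A B) :=
  {r | ∃ b, goodSchool I a abar b ∧ r = (siblingPair I RM a abar b).1}

/-- `R_out(a, ā)`. -/
def Rout (I : SchoolInstance A B) (RM : Matching I → Set (Rot A B))
    (a abar : A) : Set (Rot A B) :=
  {r | ∃ b, goodSchool I a abar b ∧ r = (siblingPair I RM a abar b).2}

/-- The indicator function: `0` when the siblings are matched to the same
school, `1` otherwise. -/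
def sibIndicator (I : SchoolInstance A B) (a abar : A) : Matching I → ℝ :=
  fun M => if M.toFun a = M.toFun abar then 0 else 1

end SM

/-!
Stable matchings form a lattice under the students' order, with join and meet the pointwise
student-best and student-worst choices. That these are again stable matchings rests on the rural
hospitals theorem: a school has equally many students in all stable matchings, and in the
pointwise best (worst) matching it keeps its whole set of students from one of the two. An
immediate predecessor is a cover in this lattice, and `ρ(M, M')` records the students the cover
moves, with their old and new schools.

A rotation is determined by any one student `a` it moves together with the school `c` that `a`
leaves. For covers `P' ⋖ P` and `Q' ⋖ Q` with `Q ≤ P` that both move `a` away from `c`, the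
lattice forces `P' ⊔ Q = P`, `Q' ≤ P'` and `P' ⊓ Q ≤ Q'`, so both move the same students in the
same way; incomparable covers are each compared with a cover below `P ⊓ Q` that moves `a` away
from `c`. Hence `|R(I)| ≤ |A| (|B| + 1) ≤ n²`.
-/

theorem CovBy.sup_eq_of_not_le {α : Type*} [Lattice α] {a b c : α} (h : a ⋖ b) (hc : c ≤ b)
    (hca : ¬ c ≤ a) : a ⊔ c = b :=
  (h.eq_or_eq le_sup_left (sup_le h.le hc)).resolve_left fun e => hca (e ▸ le_sup_right)

namespace SM

open Finset

variable {A B : Type}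

section Preferences

variable [Fintype A] [Fintype B] {I : SchoolInstance A B}

instance (a : A) : IsStrictTotalOrder (Option B) (I.prefA a) := I.prefA_sto a

instance (b : B) : IsStrictTotalOrder (Option A) (I.prefB b) := I.prefB_sto b

def WeaklyPrefers (I : SchoolInstance A B) (a : A) (x y : Option B) : Prop :=
  x = y ∨ I.prefA a x y

variable {a : A} {x y z : Option B}

theorem WeaklyPrefers.refl (x : Option B) : WeaklyPrefers I a x x := Or.inl rfl

theorem weaklyPrefers_of_prefers (h : I.prefA a x y) : WeaklyPrefers I a x y := Or.inr h

theorem not_weaklyPrefers_iff : ¬ WeaklyPrefers I a x y ↔ I.prefA a y x := by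
  unfold WeaklyPrefers
  rcases trichotomous_of (I.prefA a) x y with h | rfl | h
  · simp [h, asymm_of (I.prefA a) h]
  · simp [irrefl_of (I.prefA a) x]
  · simp [h, asymm_of (I.prefA a) h, (ne_of_irrefl h).symm]

theorem not_prefers_iff : ¬ I.prefA a x y ↔ WeaklyPrefers I a y x := by
  rw [← not_weaklyPrefers_iff, not_not]

theorem WeaklyPrefers.total (x y : Option B) : WeaklyPrefers I a x y ∨ WeaklyPrefers I a y x := by
  by_contra! h
  exact weaklyPrefers_of_prefers (not_weaklyPrefers_iff.1 h.1) |> h.2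

theorem WeaklyPrefers.prefers_of_ne (h : WeaklyPrefers I a x y) (hne : x ≠ y) :
    I.prefA a x y :=
  h.resolve_left hne

theorem WeaklyPrefers.trans (h₁ : WeaklyPrefers I a x y) (h₂ : WeaklyPrefers I a y z) :
    WeaklyPrefers I a x z := by
  rcases h₁ with rfl | h₁
  · exact h₂
  rcases h₂ with rfl | h₂
  · exact Or.inr h₁
  · exact Or.inr (trans_of (I.prefA a) h₁ h₂)

theorem WeaklyPrefers.antisymm (h₁ : WeaklyPrefers I a x y) (h₂ : WeaklyPrefers I a y x) :
    x = y :=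
  by_contra fun hne => not_weaklyPrefers_iff.2 (h₁.prefers_of_ne hne) h₂

theorem prefers_of_prefers_of_weaklyPrefers (h₁ : I.prefA a x y) (h₂ : WeaklyPrefers I a y z) :
    I.prefA a x z := by
  rcases h₂ with rfl | h₂
  exacts [h₁, trans_of (I.prefA a) h₁ h₂]

end Preferences

section Pointwise

variable [Fintype A] [Fintype B] {I : SchoolInstance A B}

def studentBest (I : SchoolInstance A B) (f g : A → Option B) : A → Option B :=
  fun a => if WeaklyPrefers I a (f a) (g a) then f a else g a

def studentWorst (I : SchoolInstance A B) (f g : A → Option B) : A → Option B :=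
  fun a => if WeaklyPrefers I a (f a) (g a) then g a else f a

variable (f g : A → Option B) (a : A)

theorem studentBest_studentWorst_cases :
    (studentBest I f g a = f a ∧ studentWorst I f g a = g a) ∨
      (studentBest I f g a = g a ∧ studentWorst I f g a = f a) := by
  unfold studentBest studentWorst
  split_ifs <;> simp

theorem studentBest_eq_or : studentBest I f g a = f a ∨ studentBest I f g a = g a :=
  (studentBest_studentWorst_cases f g a).imp And.left And.left

theorem studentWorst_eq_or : studentWorst I f g a = f a ∨ studentWorst I f g a = g a :=
  (studentBest_studentWorst_cases f g a).symm.imp And.right And.right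

theorem studentBest_of_weaklyPrefers (h : WeaklyPrefers I a (f a) (g a)) :
    studentBest I f g a = f a :=
  if_pos h

theorem studentWorst_of_weaklyPrefers (h : WeaklyPrefers I a (f a) (g a)) :
    studentWorst I f g a = g a :=
  if_pos h

theorem studentBest_comm : studentBest I f g = studentBest I g f := by
  funext a
  unfold studentBest
  split_ifs with h₁ h₂ h₂
  · exact h₁.antisymm h₂
  all_goals first | rfl | exact absurd ((WeaklyPrefers.total _ _).resolve_left h₁) h₂

theorem studentWorst_comm : studentWorst I f g = studentWorst I g f := by
  funext a
  unfold studentWorst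
  split_ifs with h₁ h₂ h₂
  · exact h₂.antisymm h₁
  all_goals first | rfl | exact absurd ((WeaklyPrefers.total _ _).resolve_left h₁) h₂

theorem weaklyPrefers_studentBest_left : WeaklyPrefers I a (studentBest I f g a) (f a) := by
  unfold studentBest
  split_ifs with h
  exacts [.refl _, (WeaklyPrefers.total _ _).resolve_left h]

theorem weaklyPrefers_studentBest_right : WeaklyPrefers I a (studentBest I f g a) (g a) := by
  rw [studentBest_comm]; exact weaklyPrefers_studentBest_left g f a

theorem weaklyPrefers_studentWorst_left : WeaklyPrefers I a (f a) (studentWorst I f g a) := by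
  unfold studentWorst
  split_ifs with h
  exacts [h, .refl _]

theorem weaklyPrefers_studentWorst_right : WeaklyPrefers I a (g a) (studentWorst I f g a) := by
  rw [studentWorst_comm]; exact weaklyPrefers_studentWorst_left g f a

theorem studentBest_eq_of_ne_left {x : Option B} (h : studentBest I f g a = x) (hf : f a ≠ x) :
    g a = x ∧ I.prefA a x (f a) := by
  refine ⟨(studentBest_eq_or f g a).resolve_left (fun e => hf (e ▸ h)) ▸ h, ?_⟩
  exact (h ▸ weaklyPrefers_studentBest_left f g a).prefers_of_ne (Ne.symm hf)

end Pointwise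

section Stability

variable [Fintype A] [Fintype B] [DecidableEq B] {I : SchoolInstance A B} {M : Matching I}
  {a : A} {b : B}

theorem Stable.not_blocksPair (hM : Stable I M) : ¬ BlocksPair I M a b :=
  fun h => hM.1 ⟨a, b, h⟩

theorem Stable.prefA_none (hM : Stable I M) (h : M.toFun a = some b) :
    I.prefA a (some b) none := by
  rw [← not_weaklyPrefers_iff]
  rintro (h' | h')
  · exact Option.some_ne_none b h'.symm
  · exact hM.2.1 ⟨a, by rwa [BlocksStudent, h]⟩

theorem Stable.prefB_none (hM : Stable I M) (h : M.toFun a = some b) :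
    I.prefB b (some a) none := by
  rcases trichotomous_of (I.prefB b) (some a) none with h' | h' | h'
  · exact h'
  · exact absurd h' (Option.some_ne_none a)
  · exact absurd ⟨b, a, h, h'⟩ hM.2.2

theorem Stable.prefB_of_envy (hM : Stable I M) (hab : I.prefA a (some b) (M.toFun a))
    {y : A} (hy : M.toFun y = some b) : I.prefB b (some y) (some a) := by
  rcases trichotomous_of (I.prefB b) (some y) (some a) with h | h | h
  · exact h
  · cases Option.some.inj h
    exact absurd (hy ▸ hab) (irrefl_of (I.prefA a) _)
  · exact absurd ⟨hab, some y, Or.inl ⟨y, rfl, hy⟩, h⟩ hM.not_blocksPair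

theorem Stable.not_hasSlack_of_envy (hM : Stable I M) (hab : I.prefA a (some b) (M.toFun a))
    (hb : I.prefB b (some a) none) : ¬ hasSlack I M b :=
  fun hs => hM.not_blocksPair ⟨hab, none, Or.inr ⟨rfl, hs⟩, hb⟩

end Stability

section Fibers

variable [Fintype A] [DecidableEq B]

def fiber (f : A → Option B) (b : B) : Finset A := {a | f a = some b}

@[simp]
theorem mem_fiber {f : A → Option B} {b : B} {a : A} : a ∈ fiber f b ↔ f a = some b := by
  simp [fiber]

theorem fiber_studentWorst_eq_of_fiber_studentBest_eq [Fintype B] {I : SchoolInstance A B}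
    {f g : A → Option B} {b : B} (h : fiber (studentBest I f g) b = fiber f b) :
    fiber (studentWorst I f g) b = fiber g b := by
  ext x
  have hx := Finset.ext_iff.1 h x
  simp only [mem_fiber] at hx ⊢
  rcases studentBest_studentWorst_cases f g x with ⟨hb, hw⟩ | ⟨hb, hw⟩ <;> rw [hw]
  rw [hb] at hx
  exact hx.symm

theorem sum_card_fiber [Fintype B] (f : A → Option B) :
    ∑ b, #(fiber f b) = #{a | f a ≠ none} := by
  simp only [fiber, card_filter]
  rw [sum_comm]
  refine sum_congr rfl fun a _ => ?_
  cases f a <;> simp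

variable [Fintype B] {I : SchoolInstance A B}

theorem card_fiber_le_quota (M : Matching I) (b : B) : #(fiber M.toFun b) ≤ I.q b := by
  convert M.quota b using 2
  ext; simp

theorem hasSlack_iff_card_fiber {M : Matching I} {b : B} :
    hasSlack I M b ↔ #(fiber M.toFun b) < I.q b := Iff.rfl

def Matching.ofFiber (f : A → Option B) (hf : ∀ b, #(fiber f b) ≤ I.q b) : Matching I :=
  ⟨f, fun b => by convert hf b using 2; ext; simp⟩

@[simp]
theorem Matching.ofFiber_toFun (f : A → Option B) (hf : ∀ b, #(fiber f b) ≤ I.q b) :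
    (Matching.ofFiber f hf).toFun = f := rfl

end Fibers

section RuralHospitals

variable [Fintype A] [Fintype B] [DecidableEq B] {I : SchoolInstance A B} {M N : Matching I}

theorem fiber_studentBest_subset_or (hM : Stable I M) (hN : Stable I N) (b : B) :
    fiber (studentBest I M.toFun N.toFun) b ⊆ fiber M.toFun b ∨
      fiber (studentBest I M.toFun N.toFun) b ⊆ fiber N.toFun b := by
  refine or_iff_not_imp_left.2 fun hsub => ?_
  obtain ⟨z, hz, hMz⟩ := not_subset.1 hsub
  rw [mem_fiber] at hz hMz
  obtain ⟨hNz, hzb⟩ := studentBest_eq_of_ne_left _ _ _ hz hMz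
  intro w hw
  rw [mem_fiber] at hw ⊢
  by_contra hNw
  rw [studentBest_comm] at hw
  obtain ⟨hMw, hwb⟩ := studentBest_eq_of_ne_left _ _ _ hw hNw
  exact hN.not_blocksPair ⟨hwb, some z, Or.inl ⟨z, rfl, hNz⟩, hM.prefB_of_envy hzb hMw⟩

theorem card_fiber_studentBest_le (hM : Stable I M) (hN : Stable I N) (b : B) :
    #(fiber (studentBest I M.toFun N.toFun) b) ≤ #(fiber M.toFun b) := by
  by_cases hsub : fiber (studentBest I M.toFun N.toFun) b ⊆ fiber M.toFun b
  · exact card_le_card hsub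
  obtain ⟨z, hz, hMz⟩ := not_subset.1 hsub
  rw [mem_fiber] at hz hMz
  obtain ⟨hNz, hzb⟩ := studentBest_eq_of_ne_left _ _ _ hz hMz
  have hfull : I.q b ≤ #(fiber M.toFun b) :=
    not_lt.1 (hM.not_hasSlack_of_envy hzb (hN.prefB_none hNz))
  calc #(fiber (studentBest I M.toFun N.toFun) b)
      ≤ #(fiber N.toFun b) :=
        card_le_card ((fiber_studentBest_subset_or hM hN b).resolve_left hsub)
    _ ≤ I.q b := card_fiber_le_quota N b
    _ ≤ #(fiber M.toFun b) := hfull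

theorem card_matched_le (hM : Stable I M) {g : A → Option B}
    (hg : ∀ a, WeaklyPrefers I a (g a) (M.toFun a)) :
    #{a | M.toFun a ≠ none} ≤ #{a | g a ≠ none} := by
  refine card_le_card fun a ha => ?_
  simp only [mem_filter, mem_univ, true_and, ne_eq] at ha ⊢
  obtain ⟨c, hc⟩ := Option.ne_none_iff_exists'.1 ha
  intro hga
  exact not_weaklyPrefers_iff.2 (hM.prefA_none hc) (hga ▸ hc ▸ hg a)

theorem card_fiber_studentBest_eq (hM : Stable I M) (hN : Stable I N) (b : B) :
    #(fiber (studentBest I M.toFun N.toFun) b) = #(fiber M.toFun b) := by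
  have hle := card_fiber_studentBest_le hM hN
  -- Everyone matched in `M` stays matched, so none of the inequalities `hle` is strict.
  have hsum : ∑ c, #(fiber M.toFun c) ≤ ∑ c, #(fiber (studentBest I M.toFun N.toFun) c) := by
    rw [sum_card_fiber, sum_card_fiber]
    exact card_matched_le hM (weaklyPrefers_studentBest_left _ _)
  exact (sum_eq_sum_iff_of_le fun c _ => hle c).1
    ((sum_le_sum fun c _ => hle c).antisymm hsum) b (mem_univ b)

theorem card_fiber_eq_of_stable (hM : Stable I M) (hN : Stable I N) (b : B) :
    #(fiber M.toFun b) = #(fiber N.toFun b) := by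
  rw [← card_fiber_studentBest_eq hM hN, studentBest_comm, card_fiber_studentBest_eq hN hM]

theorem hasSlack_iff_of_stable (hM : Stable I M) (hN : Stable I N) {b : B} :
    hasSlack I M b ↔ hasSlack I N b := by
  rw [hasSlack_iff_card_fiber, hasSlack_iff_card_fiber, card_fiber_eq_of_stable hM hN]

end RuralHospitals

section JoinMeet

variable [Fintype A] [Fintype B] [DecidableEq B] {I : SchoolInstance A B} {M N : Matching I}

theorem fiber_studentBest_eq_or (hM : Stable I M) (hN : Stable I N) (b : B) :
    fiber (studentBest I M.toFun N.toFun) b = fiber M.toFun b ∨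
      fiber (studentBest I M.toFun N.toFun) b = fiber N.toFun b := by
  have hcard := card_fiber_studentBest_eq hM hN b
  refine (fiber_studentBest_subset_or hM hN b).imp (fun h => eq_of_subset_of_card_le h hcard.ge)
    fun h => eq_of_subset_of_card_le h (hcard.trans (card_fiber_eq_of_stable hM hN b)).ge

theorem fiber_studentWorst_eq_or (hM : Stable I M) (hN : Stable I N) (b : B) :
    fiber (studentWorst I M.toFun N.toFun) b = fiber N.toFun b ∨
      fiber (studentWorst I M.toFun N.toFun) b = fiber M.toFun b := by
  rcases fiber_studentBest_eq_or hM hN b with h | h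
  · exact Or.inl (fiber_studentWorst_eq_of_fiber_studentBest_eq h)
  · rw [studentBest_comm] at h
    rw [studentWorst_comm]
    exact Or.inr (fiber_studentWorst_eq_of_fiber_studentBest_eq h)

theorem card_fiber_studentBest_le_quota (hM : Stable I M) (hN : Stable I N) (b : B) :
    #(fiber (studentBest I M.toFun N.toFun) b) ≤ I.q b :=
  (card_fiber_studentBest_eq hM hN b).trans_le (card_fiber_le_quota M b)

theorem card_fiber_studentWorst_le_quota (hM : Stable I M) (hN : Stable I N) (b : B) :
    #(fiber (studentWorst I M.toFun N.toFun) b) ≤ I.q b := by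
  rcases fiber_studentWorst_eq_or hM hN b with h | h <;> rw [h]
  exacts [card_fiber_le_quota N b, card_fiber_le_quota M b]

theorem stable_of_eq_or (hM : Stable I M) (hN : Stable I N) {K : Matching I}
    (hK : ∀ a, K.toFun a = M.toFun a ∨ K.toFun a = N.toFun a)
    (hpair : ∀ a b, ¬ BlocksPair I K a b) : Stable I K := by
  refine ⟨fun ⟨a, b, h⟩ => hpair a b h, fun ⟨a, ha⟩ => ?_, fun ⟨b, a, ha, hb⟩ => ?_⟩
  · unfold BlocksStudent at ha
    rcases hK a with h | h <;> rw [h] at ha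
    exacts [hM.2.1 ⟨a, ha⟩, hN.2.1 ⟨a, ha⟩]
  · rcases hK a with h | h <;> rw [h] at ha
    exacts [hM.2.2 ⟨b, a, ha, hb⟩, hN.2.2 ⟨b, a, ha, hb⟩]

theorem stable_ofFiber_studentBest (hM : Stable I M) (hN : Stable I N)
    (hq : ∀ b, #(fiber (studentBest I M.toFun N.toFun) b) ≤ I.q b) :
    Stable I (Matching.ofFiber _ hq) := by
  refine stable_of_eq_or hM hN (studentBest_eq_or _ _) fun a b => ?_
  rintro ⟨hab, x, hx, hxa⟩
  simp only [Matching.ofFiber_toFun] at hab hx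
  have hMa := prefers_of_prefers_of_weaklyPrefers hab (weaklyPrefers_studentBest_left _ _ a)
  rcases hx with ⟨z, rfl, hz⟩ | ⟨rfl, hs⟩
  · rcases studentBest_eq_or M.toFun N.toFun z with h | h
    · exact hM.not_blocksPair ⟨hMa, some z, Or.inl ⟨z, rfl, h.symm.trans hz⟩, hxa⟩
    · have hNa := prefers_of_prefers_of_weaklyPrefers hab (weaklyPrefers_studentBest_right _ _ a)
      exact hN.not_blocksPair ⟨hNa, some z, Or.inl ⟨z, rfl, h.symm.trans hz⟩, hxa⟩
  · rw [hasSlack_iff_card_fiber, Matching.ofFiber_toFun, card_fiber_studentBest_eq hM hN] at hs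
    exact hM.not_blocksPair ⟨hMa, none, Or.inr ⟨rfl, hs⟩, hxa⟩

theorem not_blocksPair_of_fiber_eq (hM : Stable I M) (hN : Stable I N) {K : Matching I}
    (hK : K.toFun = studentWorst I M.toFun N.toFun) {a : A} {b : B}
    (hKb : fiber K.toFun b = fiber M.toFun b)
    (hJb : fiber (studentBest I M.toFun N.toFun) b = fiber N.toFun b) :
    ¬ BlocksPair I K a b := by
  rintro ⟨hab, x, hx, hxa⟩
  have hxM : inPartners I M b x := by
    rcases hx with ⟨z, rfl, hz⟩ | ⟨rfl, hs⟩
    · exact Or.inl ⟨z, rfl, mem_fiber.1 (hKb ▸ mem_fiber.2 hz)⟩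
    · exact Or.inr ⟨rfl, by rwa [hasSlack_iff_card_fiber, ← hKb]⟩
  by_cases hMa : I.prefA a (some b) (M.toFun a)
  · exact hM.not_blocksPair ⟨hMa, x, hxM, hxa⟩
  have hMa' : I.prefA a (M.toFun a) (some b) := by
    refine (not_prefers_iff.1 hMa).prefers_of_ne fun h => irrefl_of (I.prefA a) (some b) ?_
    rwa [mem_fiber.1 (hKb ▸ mem_fiber.2 h : a ∈ fiber K.toFun b)] at hab
  have hKa : K.toFun a = N.toFun a := by
    refine (hK ▸ studentWorst_eq_or M.toFun N.toFun a).resolve_left fun h => ?_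
    exact asymm_of (I.prefA a) hab (h ▸ hMa')
  rw [hKa] at hab
  rcases hxM with ⟨z, rfl, hMz⟩ | ⟨rfl, hs⟩
  · by_cases hNz : N.toFun z = some b
    · exact hN.not_blocksPair ⟨hab, some z, Or.inl ⟨z, rfl, hNz⟩, hxa⟩
    have hNM : ¬ fiber N.toFun b ⊆ fiber M.toFun b := fun hsub =>
      hNz (mem_fiber.1 (eq_of_subset_of_card_le hsub (card_fiber_eq_of_stable hM hN b).le ▸
        mem_fiber.2 hMz))
    -- `w` gets `b` in the student-best matching but not in `M`, so `b` ranks `z`, hence `a`,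
    -- above `w`, and `a` blocks `N` with `w`.
    obtain ⟨w, hNw, hMw⟩ := not_subset.1 hNM
    obtain ⟨-, hwb⟩ :=
      studentBest_eq_of_ne_left _ _ _ (mem_fiber.1 (hJb ▸ hNw)) (mem_fiber.not.1 hMw)
    exact hN.not_blocksPair ⟨hab, some w, Or.inl ⟨w, rfl, mem_fiber.1 hNw⟩,
      trans_of (I.prefB b) hxa (hM.prefB_of_envy hwb hMz)⟩
  · have hsN := (hasSlack_iff_of_stable hM hN).1 hs
    exact hN.not_blocksPair ⟨hab, none, Or.inr ⟨rfl, hsN⟩, hxa⟩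

theorem stable_ofFiber_studentWorst (hM : Stable I M) (hN : Stable I N)
    (hq : ∀ b, #(fiber (studentWorst I M.toFun N.toFun) b) ≤ I.q b) :
    Stable I (Matching.ofFiber _ hq) := by
  refine stable_of_eq_or hM hN (studentWorst_eq_or _ _) fun a b => ?_
  rcases fiber_studentBest_eq_or hM hN b with h | h
  · have hKb := fiber_studentWorst_eq_of_fiber_studentBest_eq h
    rw [studentBest_comm] at h
    exact not_blocksPair_of_fiber_eq hN hM (studentWorst_comm _ _) hKb h
  · refine not_blocksPair_of_fiber_eq hM hN rfl ?_ h
    rw [studentBest_comm] at h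
    rw [Matching.ofFiber_toFun, studentWorst_comm]
    exact fiber_studentWorst_eq_of_fiber_studentBest_eq h

end JoinMeet

section StableLattice

variable [Fintype A] [Fintype B] {I : SchoolInstance A B}

theorem Matching.ext {M N : Matching I} (h : M.toFun = N.toFun) : M = N := by
  cases M; cases N; cases h; rfl

/-- Matchings are ordered by the students' preferences: `M ≤ N` when every student weakly
prefers `N`. -/
instance : PartialOrder (Matching I) where
  le M N := matGE I N M
  le_refl _ _ := WeaklyPrefers.refl _
  le_trans _ _ _ h₁ h₂ a := WeaklyPrefers.trans (h₂ a) (h₁ a)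
  le_antisymm _ _ h₁ h₂ := Matching.ext (funext fun a => WeaklyPrefers.antisymm (h₂ a) (h₁ a))

theorem Matching.lt_iff_matLT {M N : Matching I} : M < N ↔ matLT I M N :=
  lt_iff_le_and_ne.trans (and_congr Iff.rfl (not_congr ⟨congrArg _, Matching.ext⟩))

instance : Finite (Matching I) :=
  Finite.of_injective Matching.toFun fun _ _ => Matching.ext

variable [DecidableEq B]

abbrev StableMatching (I : SchoolInstance A B) : Type := {M : Matching I // Stable I M}

namespace StableMatching

instance : CoeFun (StableMatching I) fun _ => A → Option B := ⟨fun M => M.1.toFun⟩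

theorem weaklyPrefers_of_le {M N : StableMatching I} (h : M ≤ N) (a : A) :
    WeaklyPrefers I a (N a) (M a) :=
  h a

instance : Lattice (StableMatching I) where
  sup M N := ⟨.ofFiber _ (card_fiber_studentBest_le_quota M.2 N.2),
    stable_ofFiber_studentBest M.2 N.2 _⟩
  le_sup_left M N := weaklyPrefers_studentBest_left M N
  le_sup_right M N := weaklyPrefers_studentBest_right M N
  sup_le M N P h₁ h₂ a := by
    show WeaklyPrefers I a (P a) (studentBest I M N a)
    rcases studentBest_eq_or M N a with h | h <;> rw [h]
    exacts [h₁ a, h₂ a]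
  inf M N := ⟨.ofFiber _ (card_fiber_studentWorst_le_quota M.2 N.2),
    stable_ofFiber_studentWorst M.2 N.2 _⟩
  inf_le_left M N := weaklyPrefers_studentWorst_left M N
  inf_le_right M N := weaklyPrefers_studentWorst_right M N
  le_inf M N P h₁ h₂ a := by
    show WeaklyPrefers I a (studentWorst I N P a) (M a)
    rcases studentWorst_eq_or N P a with h | h <;> rw [h]
    exacts [h₁ a, h₂ a]

theorem sup_apply_eq_or (M N : StableMatching I) (a : A) :
    (M ⊔ N) a = M a ∨ (M ⊔ N) a = N a :=
  studentBest_eq_or M N a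

theorem inf_apply_eq_or (M N : StableMatching I) (a : A) :
    (M ⊓ N) a = M a ∨ (M ⊓ N) a = N a :=
  studentWorst_eq_or M N a

theorem inf_apply_of_weaklyPrefers {M N : StableMatching I} {a : A}
    (h : WeaklyPrefers I a (M a) (N a)) : (M ⊓ N) a = N a :=
  studentWorst_of_weaklyPrefers M N a h

theorem covBy_iff_immPred {M' M : StableMatching I} : M' ⋖ M ↔ ImmPred I M'.1 M.1 := by
  simp only [CovBy, ImmPred, M'.2, M.2, true_and, ← Matching.lt_iff_matLT, not_exists, not_and]
  exact and_congr Iff.rfl ⟨fun h X hX => h (c := ⟨X, hX⟩), fun h X => h X.1 X.2⟩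

theorem le_of_covBy_of_apply_ne {X Y Z : StableMatching I} (h : X ⋖ Y) (hZ : Z ≤ Y) {a : A}
    (hXa : X a ≠ Y a) (hZa : Z a ≠ Y a) : Z ≤ X := by
  by_contra hZX
  have hja := congrArg (· a) (h.sup_eq_of_not_le hZ hZX)
  rcases sup_apply_eq_or X Z a with e | e <;> rw [e] at hja
  exacts [hXa hja, hZa hja]

theorem exists_covBy_apply_ne {Y X : StableMatching I} (hYX : Y ≤ X) {a : A} (hY : Y a ≠ X a) :
    ∃ W W' : StableMatching I, W ≤ X ∧ W a = X a ∧ W' ⋖ W ∧ W' a ≠ X a := by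
  obtain ⟨W, hWX, ⟨hYW, hWa⟩, hWmin⟩ :=
    exists_minimal_le_of_wellFoundedLT (fun Z => Y ≤ Z ∧ Z a = X a) X ⟨hYX, rfl⟩
  have hlt : Y < W := hYW.lt_of_ne (by rintro rfl; exact hY hWa)
  obtain ⟨W', hYW', hW'W⟩ := exists_le_covBy_of_lt hlt
  exact ⟨W, W', hWX, hWa, hW'W, fun h => hW'W.lt.not_ge (hWmin ⟨hYW', h⟩ hW'W.le)⟩

end StableMatching

end StableLattice

section Rotations

variable [Fintype A] [Fintype B] [DecidableEq A] [DecidableEq B] {I : SchoolInstance A B}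

theorem pairsOf_sdiff_pairsOf {M M' : Matching I} (hM : Stable I M) (hM' : Stable I M') :
    pairsOf I M \ pairsOf I M' =
      ({x | M'.toFun x ≠ M.toFun x} : Finset A).image fun x => (some x, M.toFun x) := by
  ext p
  simp only [pairsOf, mem_sdiff, mem_filter, mem_univ, true_and, mem_image]
  constructor
  · rintro ⟨⟨x, rfl⟩ | ⟨b, hb, rfl⟩, hp⟩
    · exact ⟨x, fun h => hp (Or.inl ⟨x, by rw [h]⟩), rfl⟩
    · exact absurd (Or.inr ⟨b, (hasSlack_iff_of_stable hM hM').1 hb, rfl⟩) hp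
  · rintro ⟨x, hx, rfl⟩
    refine ⟨Or.inl ⟨x, rfl⟩, ?_⟩
    rintro (⟨y, hy⟩ | ⟨b, -, hb⟩)
    · simp only [Prod.mk.injEq, Option.some.injEq] at hy
      obtain ⟨rfl, h⟩ := hy
      exact hx h.symm
    · exact Option.some_ne_none x (congrArg Prod.fst hb)

namespace StableMatching

theorem rho_eq (M M' : StableMatching I) :
    rho I M.1 M'.1 = (({x | M' x ≠ M x} : Finset A).image fun x => (some x, M x),
      ({x | M' x ≠ M x} : Finset A).image fun x => (some x, M' x)) := by
  rw [rho, pairsOf_sdiff_pairsOf M.2 M'.2, pairsOf_sdiff_pairsOf M'.2 M.2]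
  simp_rw [ne_comm (a := M.1.toFun _)]

theorem rho_eq_rho {P' P Q' Q : StableMatching I} (hmoved : ∀ x, P' x ≠ P x ↔ Q' x ≠ Q x)
    (hval : ∀ x, P' x ≠ P x → P x = Q x ∧ P' x = Q' x) :
    rho I P.1 P'.1 = rho I Q.1 Q'.1 := by
  have hfilter : ({x | P' x ≠ P x} : Finset A) = ({x | Q' x ≠ Q x} : Finset A) := by
    ext x; simpa using hmoved x
  rw [rho_eq, rho_eq, ← hfilter]
  refine Prod.ext (image_congr fun x hx => ?_) (image_congr fun x hx => ?_) <;>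
    simp only [coe_filter, mem_univ, true_and, Set.mem_ofPred_eq] at hx <;> simp [hval x hx]

theorem rho_eq_rho_of_covBy_of_le {P' P Q' Q : StableMatching I} (hP : P' ⋖ P) (hQ : Q' ⋖ Q)
    (hQP : Q ≤ P) {a : A} (ha : P a = Q a) (hPa : P' a ≠ P a) (hQa : Q' a ≠ Q a) :
    rho I P.1 P'.1 = rho I Q.1 Q'.1 := by
  have hQP'a : I.prefA a (Q a) (P' a) := ha ▸ (weaklyPrefers_of_le hP.le a).prefers_of_ne hPa.symm
  have hjoin : P' ⊔ Q = P :=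
    hP.sup_eq_of_not_le hQP fun h => not_weaklyPrefers_iff.2 hQP'a (h a)
  have hQ'P' : Q' ≤ P' := le_of_covBy_of_apply_ne hP (hQ.le.trans hQP) hPa (by rwa [ha])
  have hmeet : P' ⊓ Q ≤ Q' := by
    refine le_of_covBy_of_apply_ne hQ inf_le_right hQa ?_
    rwa [inf_comm, inf_apply_of_weaklyPrefers (weaklyPrefers_of_prefers hQP'a), ← ha]
  have hval : ∀ x, P' x ≠ P x → P x = Q x ∧ P' x = Q' x := by
    intro x hx
    have hQx : Q x = P x := by
      have hjx := congrArg (· x) hjoin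
      rcases sup_apply_eq_or P' Q x with e | e <;> rw [e] at hjx
      exacts [absurd hjx hx, hjx]
    have hQP'x : I.prefA x (Q x) (P' x) :=
      hQx ▸ (weaklyPrefers_of_le hP.le x).prefers_of_ne hx.symm
    have hmx := hmeet x
    rw [inf_comm, inf_apply_of_weaklyPrefers (weaklyPrefers_of_prefers hQP'x)] at hmx
    exact ⟨hQx.symm, (weaklyPrefers_of_le hQ'P' x).antisymm hmx⟩
  refine rho_eq_rho (fun x => ⟨fun hx => ?_, fun hx hPx => ?_⟩) hval
  · obtain ⟨hPQ, hP'Q'⟩ := hval x hx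
    rwa [← hPQ, ← hP'Q']
  · have hmx := hmeet x
    rw [inf_apply_of_weaklyPrefers (hPx ▸ hQP x)] at hmx
    exact hx ((weaklyPrefers_of_le hQ.le x).antisymm hmx).symm

theorem rho_eq_rho_of_covBy {P' P Q' Q : StableMatching I} (hP : P' ⋖ P) (hQ : Q' ⋖ Q) {a : A}
    (ha : P a = Q a) (hPa : P' a ≠ P a) (hQa : Q' a ≠ Q a) :
    rho I P.1 P'.1 = rho I Q.1 Q'.1 := by
  have hXa : (P ⊓ Q) a = P a := by
    rcases inf_apply_eq_or P Q a with h | h <;> rw [h]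
    exact ha.symm
  have hYa : (P' ⊓ (P ⊓ Q)) a = P' a := by
    rw [inf_comm, inf_apply_of_weaklyPrefers (hXa ▸ hP.le a)]
  -- A cover `W' ⋖ W` below `P ⊓ Q` that moves `a` away from its school is comparable with both.
  obtain ⟨W, W', hWX, hWa, hW, hW'a⟩ :=
    exists_covBy_apply_ne (inf_le_right : P' ⊓ (P ⊓ Q) ≤ P ⊓ Q) (by rwa [hYa, hXa])
  rw [hXa] at hWa hW'a
  rw [← hWa] at hW'a
  rw [rho_eq_rho_of_covBy_of_le hP hW (hWX.trans inf_le_left) hWa.symm hPa hW'a,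
    rho_eq_rho_of_covBy_of_le hQ hW (hWX.trans inf_le_right) (ha ▸ hWa.symm) hQa hW'a]

end StableMatching

end Rotations

section Counting

variable [Fintype A] [Fintype B] [DecidableEq A] [DecidableEq B] {I : SchoolInstance A B}

def MovesAway (I : SchoolInstance A B) (r : Rot A B) (a : A) (c : Option B) : Prop :=
  ∃ M' M : StableMatching I, M' ⋖ M ∧ r = rho I M.1 M'.1 ∧ M a = c ∧ M' a ≠ c

theorem MovesAway.eq {r₁ r₂ : Rot A B} {a : A} {c : Option B} (h₁ : MovesAway I r₁ a c)
    (h₂ : MovesAway I r₂ a c) : r₁ = r₂ := by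
  obtain ⟨P', P, hP, rfl, hPa, hP'a⟩ := h₁
  obtain ⟨Q', Q, hQ, rfl, hQa, hQ'a⟩ := h₂
  exact StableMatching.rho_eq_rho_of_covBy hP hQ (hPa.trans hQa.symm) (hPa ▸ hP'a) (hQa ▸ hQ'a)

theorem exists_movesAway {r : Rot A B} (hr : r ∈ RotSet I) :
    ∃ p : A × Option B, MovesAway I r p.1 p.2 := by
  obtain ⟨M, M', himm, rfl⟩ := hr
  obtain ⟨x, hx⟩ := Function.ne_iff.1 himm.2.2.1.2
  exact ⟨(x, M.toFun x), ⟨M', himm.1⟩, ⟨M, himm.2.1⟩,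
    StableMatching.covBy_iff_immPred.2 himm, rfl, rfl, hx⟩

theorem ncard_rotSet_le : (RotSet I).ncard ≤ Fintype.card A * (Fintype.card B + 1) := by
  choose p hp using fun r : RotSet I => exists_movesAway r.2
  calc (RotSet I).ncard = Nat.card (RotSet I) := (Nat.card_coe_set_eq _).symm
    _ ≤ Nat.card (A × Option B) :=
      Nat.card_le_card_of_injective p fun r₁ r₂ h => Subtype.ext ((hp r₁).eq (h ▸ hp r₂))
    _ = Fintype.card A * (Fintype.card B + 1) := by simp

end Counting

end SM

namespace SM

variable {A B : Type} [Fintype A] [Fintype B] [DecidableEq A] [DecidableEq B]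

/-- `|R(I)| ≤ n²`. -/
theorem stmt1 (I : SchoolInstance A B) :
    (RotSet I).ncard ≤ (Fintype.card A + Fintype.card B) ^ 2 :=
  (ncard_rotSet_le (I := I)).trans (by nlinarith [Nat.le_mul_self (Fintype.card A)])

end SM
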